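/- arXiv:1503.04411 — 5 statements merged into one kernel-verified Lean document; each statement's English description precedes it below -/
import Mathlib

section
/- Fix ε > 0 with ε ≠ 1, fix θ₂ ∈ (0, ε), and set θ₁ := θ₂/4. Then there exists a constant C > 0, depending only on ε and θ₂, such that for every integer j ≤ 0, every h ∈ (1/10, 1], and every ξ' ∈ ℝ with |ξ'| ≥ 2^{θ₁ j}, the set E_{h, ξ'} := { η ∈ (1/2, 5/2) : hη − ξ' ∈ (1/2, 5/2) and |η^{ε−1} − h·(hη − ξ')^{ε−1}| ≤ 2^{θ₂ j} } has Lebesgue measure at most C · 2^{θ₂ j / 2}. -/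
/-!
With `a = ε - 1 ≠ 0`, divide the phase difference `η ^ a - h * (h * η - ξ') ^ a` by `η ^ a`. The
result `1 - h * (h - ξ' / η) ^ a` depends on `η` only through `ξ' / η`, so on the window where
`η` and `h * η - ξ'` lie in `(1/2, 5/2)` its derivative has size `≳ |ξ'|`, while on the set in
question the function itself is `≲ 2 ^ (θ₂ j)`. By the mean value theorem the set has diameter
`≲ 2 ^ (θ₂ j) / |ξ'| ≤ 2 ^ (3 θ₂ j / 4) ≤ 2 ^ (θ₂ j / 2)`.
-/

open MeasureTheory Set

theorem Real.rpow_le_rpow_abs_of_mem_Icc {c x : ℝ} (p : ℝ) (hx₀ : 0 < x) (hx : x ∈ Icc c⁻¹ c) :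
    x ^ p ≤ c ^ |p| := by
  have hc : 0 < c := hx₀.trans_le hx.2
  have hlog : |Real.log x| ≤ Real.log c := by
    refine abs_le.2 ⟨?_, Real.log_le_log hx₀ hx.2⟩
    rw [neg_le, ← Real.log_inv]
    exact Real.log_le_log (inv_pos.2 hx₀) (inv_le_of_inv_le₀ hc hx.1)
  rw [Real.rpow_def_of_pos hx₀, Real.rpow_def_of_pos hc, Real.exp_le_exp]
  calc Real.log x * p ≤ |Real.log x| * |p| := by rw [← abs_mul]; exact le_abs_self _
    _ ≤ Real.log c * |p| := by gcongr

theorem mul_sub_le_abs_sub_of_le_abs_deriv {f f' : ℝ → ℝ} {x y L : ℝ} (hxy : x ≤ y)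
    (hf : ∀ z ∈ Icc x y, HasDerivAt f (f' z) z) (hL : ∀ z ∈ Icc x y, L ≤ |f' z|) :
    L * (y - x) ≤ |f y - f x| := by
  rcases hxy.eq_or_lt with rfl | hxy
  · simp
  obtain ⟨c, hc, hslope⟩ := exists_hasDerivAt_eq_slope f f' hxy
    (fun z hz => (hf z hz).continuousAt.continuousWithinAt)
    (fun z hz => hf z (Ioo_subset_Icc_self hz))
  have hyx : 0 < y - x := sub_pos.2 hxy
  rw [eq_div_iff hyx.ne'] at hslope
  rw [← hslope, abs_mul, abs_of_pos hyx]
  exact mul_le_mul_of_nonneg_right (hL c (Ioo_subset_Icc_self hc)) hyx.le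

theorem Real.volume_le_of_abs_le_of_le_abs_deriv {f f' : ℝ → ℝ} {S D : Set ℝ} {B L : ℝ}
    (hD : D.OrdConnected) (hSD : S ⊆ D) (hf : ∀ z ∈ D, HasDerivAt f (f' z) z)
    (hL₀ : 0 < L) (hL : ∀ z ∈ D, L ≤ |f' z|) (hB : ∀ x ∈ S, |f x| ≤ B) :
    volume S ≤ ENNReal.ofReal (2 * B / L) := by
  have hsep : ∀ x ∈ S, ∀ y ∈ S, x ≤ y → y - x ≤ 2 * B / L := by
    intro x hx y hy hxy
    have hIcc : Icc x y ⊆ D := hD.out (hSD hx) (hSD hy)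
    have hmvt := mul_sub_le_abs_sub_of_le_abs_deriv hxy (fun z hz => hf z (hIcc hz))
      (fun z hz => hL z (hIcc hz))
    rw [le_div_iff₀ hL₀]
    linarith [abs_sub (f y) (f x), hB x hx, hB y hy]
  refine (Real.volume_le_diam S).trans (Metric.ediam_le fun x hx y hy => ?_)
  rw [edist_dist, Real.dist_eq]
  refine ENNReal.ofReal_le_ofReal ?_
  rcases le_total x y with hxy | hyx
  · rw [abs_sub_comm, abs_of_nonneg (sub_nonneg.2 hxy)]; exact hsep x hx y hy hxy
  · rw [abs_of_nonneg (sub_nonneg.2 hyx)]; exact hsep y hy x hx hyx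

theorem Real.two_rpow_div_le_of_two_rpow_quarter_le {x r : ℝ} (hx : x ≤ 0) (hr : 2 ^ (x / 4) ≤ r) :
    (2 : ℝ) ^ x / r ≤ 2 ^ (x / 2) :=
  calc (2 : ℝ) ^ x / r ≤ 2 ^ x / 2 ^ (x / 4) := by gcongr
    _ = 2 ^ (x - x / 4) := (Real.rpow_sub two_pos _ _).symm
    _ ≤ 2 ^ (x / 2) := Real.rpow_le_rpow_of_exponent_le one_le_two (by linarith)

def window (h ξ' : ℝ) : Set ℝ :=
  {η | η ∈ Ioo (1 / 2 : ℝ) (5 / 2) ∧ h * η - ξ' ∈ Ioo (1 / 2 : ℝ) (5 / 2)}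

noncomputable def reducedPhase (a h ξ' η : ℝ) : ℝ :=
  1 - h * (h - ξ' / η) ^ a

section window

variable {a h ξ' η : ℝ}

theorem ordConnected_window (hh : 0 ≤ h) : (window h ξ').OrdConnected :=
  ⟨fun x hx y hy z hz => ⟨⟨by linarith [hx.1.1, hz.1], by linarith [hy.1.2, hz.2]⟩,
    ⟨by nlinarith [hx.2.1, hz.1], by nlinarith [hy.2.2, hz.2]⟩⟩⟩

theorem mem_Icc_of_mem_window (hη : η ∈ window h ξ') :
    η ∈ Icc 5⁻¹ 5 ∧ h - ξ' / η ∈ Icc 5⁻¹ 5 ∧ h - ξ' / η = (h * η - ξ') / η := by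
  obtain ⟨⟨hη₁, hη₂⟩, hu₁, hu₂⟩ := hη
  have hη₀ : 0 < η := by linarith
  have hsub : h - ξ' / η = (h * η - ξ') / η := by field_simp
  refine ⟨⟨by linarith, by linarith⟩, ?_, hsub⟩
  rw [hsub]
  exact ⟨(le_div_iff₀ hη₀).2 (by linarith), (div_le_iff₀ hη₀).2 (by linarith)⟩

theorem hasDerivAt_reducedPhase (hη : 0 < η) (ht : 0 < h - ξ' / η) :
    HasDerivAt (reducedPhase a h ξ') (-(h * (ξ' / η ^ 2 * a * (h - ξ' / η) ^ (a - 1)))) η := by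
  have hinner : HasDerivAt (fun s => h - ξ' / s) (ξ' / η ^ 2) η := by
    simpa only [mul_neg, neg_neg, ← div_eq_mul_inv] using
      ((hasDerivAt_inv hη.ne').const_mul ξ').const_sub h
  exact ((hinner.rpow_const (Or.inl ht.ne')).const_mul h).const_sub 1

theorem abs_reducedPhase_le (hη : η ∈ window h ξ') :
    |reducedPhase a h ξ' η| ≤ 5 ^ |a| * |η ^ a - h * (h * η - ξ') ^ a| := by
  obtain ⟨hηI, -, hsub⟩ := mem_Icc_of_mem_window hη
  have hη₀ : 0 < η := by linarith [hη.1.1]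
  have hu₀ : 0 ≤ h * η - ξ' := by linarith [hη.2.1]
  have hquot : reducedPhase a h ξ' η = (η ^ a - h * (h * η - ξ') ^ a) * η ^ (-a) := by
    rw [reducedPhase, hsub, Real.div_rpow hu₀ hη₀.le, Real.rpow_neg hη₀.le]
    field_simp
  rw [hquot, abs_mul, abs_of_pos (Real.rpow_pos_of_pos hη₀ _), mul_comm]
  gcongr
  simpa only [abs_neg] using Real.rpow_le_rpow_abs_of_mem_Icc (-a) hη₀ hηI

theorem le_abs_deriv_reducedPhase (hh : 1 / 10 ≤ h) (hη : η ∈ window h ξ') :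
    2 / 125 * |a| / 5 ^ |a - 1| * |ξ'| ≤ |-(h * (ξ' / η ^ 2 * a * (h - ξ' / η) ^ (a - 1)))| := by
  obtain ⟨hηI, htI, -⟩ := mem_Icc_of_mem_window hη
  have hη₀ : 0 < η := by linarith [hη.1.1]
  have ht₀ : 0 < h - ξ' / η := by linarith [htI.1]
  have htpow : (5 ^ |a - 1|)⁻¹ ≤ (h - ξ' / η) ^ (a - 1) := by
    refine inv_le_of_inv_le₀ (Real.rpow_pos_of_pos ht₀ _) ?_
    rw [← Real.rpow_neg ht₀.le]
    simpa only [abs_neg] using Real.rpow_le_rpow_abs_of_mem_Icc (-(a - 1)) ht₀ htI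
  have hηsq : 4 / 25 ≤ 1 / η ^ 2 := by
    rw [le_div_iff₀ (by positivity)]; nlinarith [hη.1.2]
  rw [abs_neg, abs_mul, abs_mul, abs_mul, abs_div, abs_of_pos (by linarith : 0 < h),
    abs_of_pos (Real.rpow_pos_of_pos ht₀ _), abs_of_pos (by positivity : 0 < η ^ 2)]
  calc 2 / 125 * |a| / 5 ^ |a - 1| * |ξ'|
      = 1 / 10 * (|a| * (5 ^ |a - 1|)⁻¹ * (|ξ'| * (4 / 25))) := by ring
    _ ≤ h * (|a| * (h - ξ' / η) ^ (a - 1) * (|ξ'| * (1 / η ^ 2))) := by gcongr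
    _ = h * (|ξ'| / η ^ 2 * |a| * (h - ξ' / η) ^ (a - 1)) := by ring

end window

theorem stmt_12_general (ε θ₂ : ℝ) (hε1 : ε ≠ 1) (hθ₂ : θ₂ ∈ Set.Ioo 0 ε) :
    ∃ C : ℝ, 0 < C ∧
      ∀ j : ℤ, j ≤ 0 → ∀ h : ℝ, h ∈ Set.Ioc (1 / 10 : ℝ) 1 →
        ∀ ξ' : ℝ, (2 : ℝ) ^ ((θ₂ / 4) * (j : ℝ)) ≤ |ξ'| →
          volume {η : ℝ | η ∈ Set.Ioo (1 / 2 : ℝ) (5 / 2) ∧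
              h * η - ξ' ∈ Set.Ioo (1 / 2 : ℝ) (5 / 2) ∧
              |η ^ (ε - 1) - h * (h * η - ξ') ^ (ε - 1)| ≤ (2 : ℝ) ^ (θ₂ * (j : ℝ))}
            ≤ ENNReal.ofReal (C * (2 : ℝ) ^ (θ₂ * (j : ℝ) / 2)) := by
  have ha : 0 < |ε - 1| := abs_pos.2 (sub_ne_zero.2 hε1)
  set κ : ℝ := 2 / 125 * |ε - 1| / 5 ^ |ε - 1 - 1|
  have hκ : 0 < κ := by positivity
  refine ⟨2 * 5 ^ |ε - 1| / κ, by positivity, fun j hj h hh ξ' hξ' => ?_⟩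
  have hθj : θ₂ * j ≤ 0 := mul_nonpos_of_nonneg_of_nonpos hθ₂.1.le (by exact_mod_cast hj)
  have hξ₀ : 0 < |ξ'| := (Real.rpow_pos_of_pos two_pos _).trans_le hξ'
  rw [div_mul_eq_mul_div] at hξ'
  calc _ ≤ ENNReal.ofReal (2 * (5 ^ |ε - 1| * 2 ^ (θ₂ * j)) / (κ * |ξ'|)) :=
        Real.volume_le_of_abs_le_of_le_abs_deriv (ordConnected_window (by linarith [hh.1]))
          (fun η hη => ⟨hη.1, hη.2.1⟩)
          (fun η hη => hasDerivAt_reducedPhase (by linarith [hη.1.1])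
            (by linarith [(mem_Icc_of_mem_window hη).2.1.1]))
          (by positivity) (fun η hη => le_abs_deriv_reducedPhase hh.1.le hη)
          (fun η hη => (abs_reducedPhase_le ⟨hη.1, hη.2.1⟩).trans (by gcongr; exact hη.2.2))
    _ = ENNReal.ofReal (2 * 5 ^ |ε - 1| / κ * (2 ^ (θ₂ * j) / |ξ'|)) := by
        congr 1; field_simp
    _ ≤ _ := by
        gcongr
        exact Real.two_rpow_div_le_of_two_rpow_quarter_le hθj hξ'

theorem stmt_12 (ε θ₂ : ℝ) (hε : 0 < ε) (hε1 : ε ≠ 1) (hθ₂ : θ₂ ∈ Set.Ioo 0 ε) :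
    ∃ C : ℝ, 0 < C ∧
      ∀ j : ℤ, j ≤ 0 → ∀ h : ℝ, h ∈ Set.Ioc (1 / 10 : ℝ) 1 →
        ∀ ξ' : ℝ, (2 : ℝ) ^ ((θ₂ / 4) * (j : ℝ)) ≤ |ξ'| →
          volume {η : ℝ | η ∈ Set.Ioo (1 / 2 : ℝ) (5 / 2) ∧
              h * η - ξ' ∈ Set.Ioo (1 / 2 : ℝ) (5 / 2) ∧
              |η ^ (ε - 1) - h * (h * η - ξ') ^ (ε - 1)| ≤ (2 : ℝ) ^ (θ₂ * (j : ℝ))}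
            ≤ ENNReal.ofReal (C * (2 : ℝ) ^ (θ₂ * (j : ℝ) / 2)) :=
  stmt_12_general ε θ₂ hε1 hθ₂
end

section
/- There exists a universal constant C > 0 with the following property. Let n ≥ 2 be a real number, set λ := 2^{1/n}, let j be a nonnegative integer, let h ∈ [1/10, 1], and let ξ ∈ ℝ satisfy |ξ| ≥ n · 2^{−j/4}. Then the set E_{h, ξ} := { η ∈ (1/λ, λ²) : hη − ξ ∈ (1/λ, λ²) and |η^{n−1} − h·(hη − ξ)^{n−1}| ≤ n^{−1} · 2^{−j/2} } has Lebesgue measure at most C · 2^{−j/4}. -/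
/-!
Write `p = n - 1`. For `η` in the set, both `η^p` and `h (hη - ξ)^p` are at least `h/2`, and
`t ↦ t^{1/p}` is `2/(ph)`-Lipschitz on `[h/2, ∞)`; taking `p`-th roots therefore turns the defining
inequality into `|aη + b| ≤ B := 2 · 2^{-j/2} / (p h n)`, with `a = 1 - h^{1/p+1} ≥ 0` and
`b = h^{1/p} ξ`, so that `|b| ≥ h n 2^{-j/4}`. Since `η ∈ [0, 2]`, on a nonempty sublevel set
`|b| ≤ B + 2a`: either `a ≳ |b|` and the set has length `2B/a ≲ B/|b|`, or `B ≳ |b|` and the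
trivial bound `2 ≲ B/|b|` suffices. Either way the measure is `≲ B/|b| ≲ 2^{-j/4}`.
-/

open MeasureTheory Set

lemma abs_rpow_sub_rpow_le {m x y r : ℝ} (hm : 0 < m) (hr0 : 0 ≤ r) (hr1 : r ≤ 1)
    (hx : m ≤ x) (hy : m ≤ y) :
    |x ^ r - y ^ r| ≤ r * m ^ (r - 1) * |x - y| := by
  have hderiv : ∀ z ∈ Ici m, HasDerivWithinAt (fun t : ℝ => t ^ r) (r * z ^ (r - 1)) (Ici m) z :=
    fun z hz => (Real.hasDerivAt_rpow_const (Or.inl (hm.trans_le hz).ne')).hasDerivWithinAt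
  have hbound : ∀ z ∈ Ici m, ‖r * z ^ (r - 1)‖ ≤ r * m ^ (r - 1) := by
    intro z hz
    rw [Real.norm_eq_abs, abs_of_nonneg (by have := hm.trans_le hz; positivity)]
    exact mul_le_mul_of_nonneg_left (Real.rpow_le_rpow_of_nonpos hm hz (by linarith)) hr0
  simpa [Real.norm_eq_abs] using
    (convex_Ici m).norm_image_sub_le_of_norm_hasDerivWithin_le hderiv hbound hy hx

lemma abs_sub_rpow_inv_mul_le {p h x y : ℝ} (hp : 1 ≤ p) (hh0 : 0 < h) (hh1 : h ≤ 1)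
    (hx : 0 ≤ x) (hy : 0 ≤ y) (hxp : 1 / 2 ≤ x ^ p) (hyp : 1 / 2 ≤ y ^ p) :
    |x - h ^ p⁻¹ * y| ≤ 2 / (p * h) * |x ^ p - h * y ^ p| := by
  have hp0 : 0 < p := by linarith
  have hroot_x : (x ^ p) ^ p⁻¹ = x := Real.rpow_rpow_inv hx hp0.ne'
  have hroot_y : (h * y ^ p) ^ p⁻¹ = h ^ p⁻¹ * y := by
    rw [Real.mul_rpow hh0.le (by positivity), Real.rpow_rpow_inv hy hp0.ne']
  have hlip : p⁻¹ * (h / 2) ^ (p⁻¹ - 1) ≤ 2 / (p * h) := by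
    calc p⁻¹ * (h / 2) ^ (p⁻¹ - 1) ≤ p⁻¹ * (h / 2) ^ (-1 : ℝ) := by
          refine mul_le_mul_of_nonneg_left ?_ (by positivity)
          exact Real.rpow_le_rpow_of_exponent_ge (by positivity) (by linarith)
            (by linarith [inv_pos.mpr hp0])
      _ = 2 / (p * h) := by rw [Real.rpow_neg_one]; field_simp
  calc |x - h ^ p⁻¹ * y| = |(x ^ p) ^ p⁻¹ - (h * y ^ p) ^ p⁻¹| := by rw [hroot_x, hroot_y]
    _ ≤ p⁻¹ * (h / 2) ^ (p⁻¹ - 1) * |x ^ p - h * y ^ p| :=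
        abs_rpow_sub_rpow_le (by positivity) (by positivity) (inv_le_one_of_one_le₀ hp)
          (by linarith) (by nlinarith)
    _ ≤ 2 / (p * h) * |x ^ p - h * y ^ p| := by gcongr

lemma volume_abs_mul_add_le_le {a b B K L : ℝ} (ha : 0 ≤ a) (hK : 0 < K) (hb : K ≤ |b|) :
    volume {x ∈ Icc 0 L | |a * x + b| ≤ B} ≤ ENNReal.ofReal (4 * B * L / K) := by
  rcases eq_empty_or_nonempty {x ∈ Icc 0 L | |a * x + b| ≤ B} with hE | ⟨x₀, ⟨hx₀0, hx₀L⟩, hx₀⟩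
  · rw [hE, measure_empty]
    exact zero_le
  have hbB : K ≤ B + a * L := by
    calc K ≤ |b| := hb
      _ ≤ |a * x₀ + b| + |a * x₀| := by simpa using abs_sub (a * x₀ + b) (a * x₀)
      _ ≤ B + a * L := by
        rw [abs_of_nonneg (mul_nonneg ha hx₀0)]
        exact add_le_add hx₀ (mul_le_mul_of_nonneg_left hx₀L ha)
  have hL : 0 ≤ L := hx₀0.trans hx₀L
  have hB : 0 ≤ B := (abs_nonneg _).trans hx₀
  rcases le_or_gt (K / 2) (a * L) with haL | haL
  · have ha0 : 0 < a := by by_contra! h; nlinarith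
    have hsub : {x ∈ Icc 0 L | |a * x + b| ≤ B} ⊆ Icc ((-b - B) / a) ((-b + B) / a) := by
      rintro x ⟨-, hx⟩
      obtain ⟨h1, h2⟩ := abs_le.mp hx
      exact ⟨by rw [div_le_iff₀ ha0]; linarith, by rw [le_div_iff₀ ha0]; linarith⟩
    refine (measure_mono hsub).trans ?_
    rw [Real.volume_Icc]
    gcongr
    rw [← sub_div, le_div_iff₀ hK]
    field_simp
    nlinarith
  · refine (measure_mono fun x hx => hx.1).trans ?_
    rw [Real.volume_Icc]
    gcongr
    rw [le_div_iff₀ hK]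
    nlinarith

lemma half_le_rpow_sub_one {n x : ℝ} (hn : 1 ≤ n) (hx : 1 / (2 : ℝ) ^ (1 / n) < x) :
    1 / 2 ≤ x ^ (n - 1) := by
  have hn0 : 0 < n := by linarith
  calc (1 / 2 : ℝ) = (2 : ℝ) ^ (-1 : ℝ) := by norm_num
    _ ≤ (2 : ℝ) ^ (-(1 / n) * (n - 1)) := by
        gcongr
        · norm_num
        · rw [neg_mul, neg_le_neg_iff, one_div_mul_eq_div, div_le_one hn0]; linarith
    _ = (1 / (2 : ℝ) ^ (1 / n)) ^ (n - 1) := by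
        rw [Real.rpow_mul zero_le_two, Real.rpow_neg zero_le_two, one_div ((2 : ℝ) ^ _)]
    _ ≤ x ^ (n - 1) := by gcongr

lemma two_rpow_one_div_sq_le_two {n : ℝ} (hn : 2 ≤ n) : ((2 : ℝ) ^ (1 / n)) ^ 2 ≤ 2 := by
  rw [← Real.rpow_natCast, ← Real.rpow_mul zero_le_two]
  calc (2 : ℝ) ^ (1 / n * ((2 : ℕ) : ℝ)) ≤ (2 : ℝ) ^ (1 : ℝ) := by
        gcongr
        · norm_num
        · rw [one_div_mul_eq_div, div_le_one (by linarith)]; exact_mod_cast hn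
    _ = 2 := Real.rpow_one 2

lemma setOf_abs_rpow_sub_le_subset {n h ξ δ : ℝ} (hn : 2 ≤ n) (hh0 : 0 < h) (hh1 : h ≤ 1) :
    {η : ℝ | η ∈ Ioo (1 / 2 ^ (1 / n)) ((2 ^ (1 / n)) ^ 2) ∧
      h * η - ξ ∈ Ioo (1 / 2 ^ (1 / n)) ((2 ^ (1 / n)) ^ 2) ∧
      |η ^ (n - 1) - h * (h * η - ξ) ^ (n - 1)| ≤ δ} ⊆
      {η ∈ Icc 0 2 | |(1 - h ^ (n - 1)⁻¹ * h) * η + h ^ (n - 1)⁻¹ * ξ| ≤ 2 / ((n - 1) * h) * δ} := by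
  rintro η ⟨hη, hu, hδ⟩
  have hpos : 0 < 1 / (2 : ℝ) ^ (1 / n) := by positivity
  refine ⟨⟨by linarith [hη.1], hη.2.le.trans (two_rpow_one_div_sq_le_two hn)⟩, ?_⟩
  calc |(1 - h ^ (n - 1)⁻¹ * h) * η + h ^ (n - 1)⁻¹ * ξ|
      = |η - h ^ (n - 1)⁻¹ * (h * η - ξ)| := by ring_nf
    _ ≤ 2 / ((n - 1) * h) * |η ^ (n - 1) - h * (h * η - ξ) ^ (n - 1)| :=
      abs_sub_rpow_inv_mul_le (by linarith) hh0 hh1 (by linarith [hη.1]) (by linarith [hu.1])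
        (half_le_rpow_sub_one (by linarith) hη.1) (half_le_rpow_sub_one (by linarith) hu.1)
    _ ≤ 2 / ((n - 1) * h) * δ :=
      mul_le_mul_of_nonneg_left hδ (div_nonneg zero_le_two (by nlinarith))

theorem stmt_15 :
    ∃ C : ℝ, 0 < C ∧
      ∀ n : ℝ, 2 ≤ n → ∀ l : ℝ, l = (2 : ℝ) ^ (1 / n) →
        ∀ j : ℕ, ∀ h : ℝ, h ∈ Set.Icc (1 / 10 : ℝ) 1 →
          ∀ ξ : ℝ, n * (2 : ℝ) ^ (-(j : ℝ) / 4) ≤ |ξ| →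
            volume {η : ℝ | η ∈ Set.Ioo (1 / l) (l ^ 2) ∧
                h * η - ξ ∈ Set.Ioo (1 / l) (l ^ 2) ∧
                |η ^ (n - 1) - h * (h * η - ξ) ^ (n - 1)| ≤ n⁻¹ * (2 : ℝ) ^ (-(j : ℝ) / 2)}
              ≤ ENNReal.ofReal (C * (2 : ℝ) ^ (-(j : ℝ) / 4)) := by
  refine ⟨400, by norm_num, ?_⟩
  rintro n hn l rfl j h ⟨hh1, hh2⟩ ξ hξ
  set P : ℝ := (2 : ℝ) ^ (-(j : ℝ) / 4)
  have hP : 0 < P := by positivity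
  have hQ : (2 : ℝ) ^ (-(j : ℝ) / 2) = P ^ 2 := by
    rw [← Real.rpow_natCast, ← Real.rpow_mul zero_le_two]; ring_nf
  have hh0 : 0 < h := by linarith
  have hp : 1 ≤ n - 1 := by linarith
  have ha : 0 ≤ 1 - h ^ (n - 1)⁻¹ * h := by
    nlinarith [Real.rpow_le_one hh0.le hh2 (inv_nonneg.mpr (by linarith : (0 : ℝ) ≤ n - 1))]
  have hb : h * n * P ≤ |h ^ (n - 1)⁻¹ * ξ| := by
    rw [abs_mul, abs_of_nonneg (by positivity), mul_assoc]
    exact mul_le_mul (Real.self_le_rpow_of_le_one hh0.le hh2 (inv_le_one_of_one_le₀ hp)) hξ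
      (by positivity) (by positivity)
  have hbound : 4 * (2 / ((n - 1) * h) * (n⁻¹ * (2 : ℝ) ^ (-(j : ℝ) / 2))) * 2 / (h * n * P)
      ≤ 400 * P := by
    have hprod : 1 / 25 ≤ (n - 1) * h ^ 2 * n ^ 2 := by
      calc (1 / 25 : ℝ) = 1 * (1 / 10) ^ 2 * 2 ^ 2 := by norm_num
        _ ≤ (n - 1) * h ^ 2 * n ^ 2 := by gcongr
    have hsimp : 4 * (2 / ((n - 1) * h) * (n⁻¹ * P ^ 2)) * 2 / (h * n * P)
        = 16 * P / ((n - 1) * h ^ 2 * n ^ 2) := by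
      field_simp
      ring
    rw [hQ, hsimp, div_le_iff₀ (by positivity)]
    nlinarith
  calc _ ≤ _ := measure_mono (setOf_abs_rpow_sub_le_subset hn hh0 hh2)
    _ ≤ _ := volume_abs_mul_add_le_le ha (by positivity) hb
    _ ≤ _ := ENNReal.ofReal_le_ofReal hbound
end

section
/- There exists a universal constant C > 0 such that for every ε ∈ (0, 1/2], every λ ≥ 0, and every R ≥ 1, one has | ∫_1^R e^{i(λ t^ε − t)} dt/t | ≤ C. -/
/-!
With `φ(t) = λ t^ε - t` one has `φ'(t) = X(t) - 1`, where `X(t) = λ ε t^(ε-1)` decreases in `t`.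
Cut `[1, R]` at the points `T₁ ≤ T₂` where `X = 2` and `X = 1/2`. Since `ε ≤ 1/2`,
`T₂ / T₁ = 4^(1/(1-ε)) ≤ 16`, so on `[T₁, T₂]` the trivial bound `|e^{iφ}/t| = 1/t` suffices.
Off that range `|φ'| ≥ 1/2`, and one integration by parts, `e^{iφ}/t = (e^{iφ})' / (i t φ')`,
gives a bound: the boundary terms are `O(1/t)` and the derivative of `1/(t φ')` is `O(t⁻²)`.
-/

open Set intervalIntegral Complex

theorem integral_mul_cexp_eq {φ ψ w w' : ℝ → ℝ} {a b : ℝ}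
    (hφ : ∀ t ∈ uIcc a b, HasDerivAt φ (ψ t) t) (hw : ∀ t ∈ uIcc a b, HasDerivAt w (w' t) t)
    (hψ : ContinuousOn ψ (uIcc a b)) (hw' : ContinuousOn w' (uIcc a b)) :
    ∫ t in a..b, ((w t * ψ t : ℝ) : ℂ) * exp (I * φ t) =
      -I * (w b * exp (I * φ b) - w a * exp (I * φ a)) +
        I * ∫ t in a..b, (w' t : ℂ) * exp (I * φ t) := by
  have hexp : ContinuousOn (fun t => exp (I * φ t)) (uIcc a b) :=
    fun t ht => ((hφ t ht).ofReal_comp.const_mul I).cexp.continuousAt.continuousWithinAt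
  have hibp := integral_mul_deriv_eq_deriv_mul (fun t ht => (hw t ht).ofReal_comp)
    (fun t ht => ((hφ t ht).ofReal_comp.const_mul I).cexp)
    (continuous_ofReal.comp_continuousOn hw').intervalIntegrable
    (hexp.mul (continuousOn_const.mul (continuous_ofReal.comp_continuousOn hψ))).intervalIntegrable
  have hI : ∫ t in a..b, ((w t * ψ t : ℝ) : ℂ) * exp (I * φ t) =
      -I * ∫ t in a..b, (w t : ℂ) * (exp (I * φ t) * (I * ψ t)) := by
    rw [← integral_const_mul]
    congr 1 with t
    push_cast
    ring_nf
    rw [I_sq]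
    ring
  rw [hI, hibp]
  ring_nf

theorem integral_abs_le_of_abs_le_mul_zpow_neg_two {f : ℝ → ℝ} {a b c : ℝ} (ha : 0 < a)
    (hab : a ≤ b) (hc : 0 ≤ c) (hf : ContinuousOn f (Icc a b))
    (hf_le : ∀ t ∈ Icc a b, |f t| ≤ c * t ^ (-2 : ℤ)) :
    ∫ t in a..b, |f t| ≤ c / a := by
  have h0 : (0 : ℝ) ∉ uIcc a b := by
    rw [uIcc_of_le hab]
    exact fun h => (ha.trans_le h.1).false
  have hb : 0 ≤ b⁻¹ := inv_nonneg.mpr (ha.trans_le hab).le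
  calc _ ≤ ∫ t in a..b, c * t ^ (-2 : ℤ) :=
        integral_mono_on hab (hf.abs.intervalIntegrable_of_Icc hab)
          ((continuousOn_const.mul (continuousOn_id.zpow₀ (-2) fun t ht =>
            Or.inl (ha.trans_le ht.1).ne')).intervalIntegrable_of_Icc hab) hf_le
    _ = c * (a⁻¹ - b⁻¹) := by
        rw [integral_const_mul, integral_zpow (Or.inr ⟨by norm_num, h0⟩)]
        congr 1
        norm_num
        ring
    _ ≤ c / a := by
        rw [div_eq_mul_inv]
        exact mul_le_mul_of_nonneg_left (by linarith) hc

theorem norm_ofReal_mul_exp_I_mul_ofReal (x y : ℝ) : ‖(x : ℂ) * exp (I * y)‖ = |x| := by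
  rw [norm_mul, norm_exp_I_mul_ofReal, mul_one, norm_real, Real.norm_eq_abs]

theorem norm_integral_mul_cexp_le {φ ψ w w' : ℝ → ℝ} {a b : ℝ} (hab : a ≤ b)
    (hφ : ∀ t ∈ Icc a b, HasDerivAt φ (ψ t) t) (hw : ∀ t ∈ Icc a b, HasDerivAt w (w' t) t)
    (hψ : ContinuousOn ψ (Icc a b)) (hw' : ContinuousOn w' (Icc a b)) :
    ‖∫ t in a..b, ((w t * ψ t : ℝ) : ℂ) * exp (I * φ t)‖ ≤
      |w a| + |w b| + ∫ t in a..b, |w' t| := by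
  have hI : uIcc a b = Icc a b := uIcc_of_le hab
  rw [integral_mul_cexp_eq (hI ▸ hφ) (hI ▸ hw) (hI ▸ hψ) (hI ▸ hw')]
  calc _ ≤ ‖(w b : ℂ) * exp (I * φ b)‖ + ‖(w a : ℂ) * exp (I * φ a)‖ +
        ‖∫ t in a..b, (w' t : ℂ) * exp (I * φ t)‖ := by
        refine (norm_add_le _ _).trans ?_
        rw [norm_mul, norm_mul, norm_neg, norm_I, one_mul, one_mul]
        gcongr
        exact norm_sub_le _ _
    _ ≤ |w b| + |w a| + ∫ t in a..b, ‖(w' t : ℂ) * exp (I * φ t)‖ := by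
        rw [norm_ofReal_mul_exp_I_mul_ofReal (w b), norm_ofReal_mul_exp_I_mul_ofReal (w a)]
        gcongr
        exact norm_integral_le_integral_norm hab
    _ = |w a| + |w b| + ∫ t in a..b, |w' t| := by
        simp only [norm_ofReal_mul_exp_I_mul_ofReal]
        ring

theorem norm_integral_cexp_div_le {φ g h : ℝ → ℝ} {a b c : ℝ}
    (ha : 0 < a) (hab : a ≤ b) (hc : 0 ≤ c)
    (hφ : ∀ t ∈ Icc a b, HasDerivAt φ (g t / t) t)
    (hg : ∀ t ∈ Icc a b, HasDerivAt g (h t / t) t)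
    (hh : ContinuousOn h (Icc a b))
    (hg_ge : ∀ t ∈ Icc a b, t / 2 ≤ |g t|)
    (hh_le : ∀ t ∈ Icc a b, |h t| ≤ c * g t ^ 2 / t) :
    ‖∫ t in a..b, exp (I * φ t) / t‖ ≤ (4 + c) / a := by
  have hpos : ∀ t ∈ Icc a b, 0 < t := fun t ht => ha.trans_le ht.1
  have hg0 : ∀ t ∈ Icc a b, g t ≠ 0 := fun t ht =>
    abs_pos.mp ((half_pos (hpos t ht)).trans_le (hg_ge t ht))
  have hgc : ContinuousOn g (Icc a b) := fun t ht => (hg t ht).continuousAt.continuousWithinAt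
  have hw' : ContinuousOn (fun t => -(h t / t) / g t ^ 2) (Icc a b) :=
    (hh.div continuousOn_id fun t ht => (hpos t ht).ne').neg.div (hgc.pow 2)
      fun t ht => pow_ne_zero 2 (hg0 t ht)
  have hinv : ∀ t ∈ Icc a b, |(g t)⁻¹| ≤ 2 / a := fun t ht => calc
    |(g t)⁻¹| ≤ (t / 2)⁻¹ := abs_inv (g t) ▸ inv_anti₀ (half_pos (hpos t ht)) (hg_ge t ht)
    _ = 2 / t := inv_div t 2
    _ ≤ 2 / a := div_le_div_of_nonneg_left zero_le_two ha ht.1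
  have hw'_le : ∀ t ∈ Icc a b, |-(h t / t) / g t ^ 2| ≤ c * t ^ (-2 : ℤ) := by
    intro t ht
    have ht0 := hpos t ht
    have hg2 : 0 < g t ^ 2 := by have := hg0 t ht; positivity
    rw [abs_div, abs_neg, abs_div, abs_of_pos ht0, abs_of_pos hg2, div_div,
      div_le_iff₀ (by positivity)]
    calc |h t| ≤ c * g t ^ 2 / t := hh_le t ht
      _ = c * t ^ (-2 : ℤ) * (t * g t ^ 2) := by field_simp
  have heq : ∫ t in a..b, exp (I * φ t) / t =
      ∫ t in a..b, (((g t)⁻¹ * (g t / t) : ℝ) : ℂ) * exp (I * φ t) := by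
    refine integral_congr fun t ht => ?_
    rw [uIcc_of_le hab] at ht
    rw [← mul_div_assoc, inv_mul_cancel₀ (hg0 t ht)]
    push_cast
    ring
  rw [heq]
  calc _ ≤ |(g a)⁻¹| + |(g b)⁻¹| + ∫ t in a..b, |-(h t / t) / g t ^ 2| :=
        norm_integral_mul_cexp_le hab hφ (fun t ht => (hg t ht).inv (hg0 t ht))
          (hgc.div continuousOn_id fun t ht => (hpos t ht).ne') hw'
    _ ≤ 2 / a + 2 / a + c / a := by
        gcongr
        · exact hinv a (left_mem_Icc.mpr hab)
        · exact hinv b (right_mem_Icc.mpr hab)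
        · exact integral_abs_le_of_abs_le_mul_zpow_neg_two ha hab hc hw' hw'_le
    _ = (4 + c) / a := by ring

noncomputable def phaseIntegrand (lam ε t : ℝ) : ℂ :=
  exp (I * ((lam * t ^ ε - t : ℝ) : ℂ)) / (t : ℂ)

theorem norm_phaseIntegrand (lam ε : ℝ) {t : ℝ} (ht : 0 < t) :
    ‖phaseIntegrand lam ε t‖ = t⁻¹ := by
  rw [phaseIntegrand, norm_div, norm_exp_I_mul_ofReal, norm_real, Real.norm_eq_abs,
    abs_of_pos ht, one_div]

theorem intervalIntegrable_phaseIntegrand (lam ε : ℝ) {x y : ℝ} (hx : 0 < x) (hy : 0 < y) :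
    IntervalIntegrable (phaseIntegrand lam ε) MeasureTheory.volume x y := by
  refine ContinuousOn.intervalIntegrable fun t ht => ?_
  have ht0 : t ≠ 0 := (lt_min hx hy |>.trans_le ht.1).ne'
  refine ContinuousAt.continuousWithinAt ?_
  unfold phaseIntegrand
  fun_prop (disch := first | exact ht0 | exact ofReal_ne_zero.mpr ht0 | exact Or.inl ht0)

theorem hasDerivAt_mul_rpow_sub_self (μ ε : ℝ) {t : ℝ} (ht : 0 < t) :
    HasDerivAt (fun s => μ * s ^ ε - s) ((μ * ε * t ^ ε - t) / t) t := by
  refine (((Real.hasDerivAt_rpow_const (Or.inl ht.ne')).const_mul μ).sub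
    (hasDerivAt_id t)).congr_deriv ?_
  rw [Real.rpow_sub_one ht.ne']
  field_simp

theorem mul_rpow_sub_self_eq (μ ε : ℝ) {t : ℝ} (ht : 0 < t) :
    μ * t ^ ε - t = t * (μ * t ^ (ε - 1) - 1) := by
  rw [Real.rpow_sub_one ht.ne']
  field_simp

theorem abs_mul_sub_one_le {ε X : ℝ} (hε0 : 0 ≤ ε) (hε1 : ε ≤ 1) (hX : 0 ≤ X)
    (h : 1 / 2 ≤ |X - 1|) : |ε * X - 1| ≤ 4 * (X - 1) ^ 2 := by
  have hsq : 1 / 4 ≤ (X - 1) ^ 2 := by nlinarith [sq_abs (X - 1)]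
  rcases le_or_gt X 1 with hX1 | hX1
  · rw [abs_le]; constructor <;> nlinarith
  · rw [abs_of_pos (by linarith : (0 : ℝ) < X - 1)] at h
    rw [abs_le]; constructor <;> nlinarith

theorem norm_integral_phaseIntegrand_le_of_nonstationary {lam ε x y : ℝ} (hlam : 0 ≤ lam)
    (hε0 : 0 ≤ ε) (hε1 : ε ≤ 1) (hx : 1 ≤ x) (hxy : x ≤ y)
    (h : ∀ t ∈ Icc x y, 1 / 2 ≤ |lam * ε * t ^ (ε - 1) - 1|) :
    ‖∫ t in x..y, phaseIntegrand lam ε t‖ ≤ 8 := by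
  have hpos : ∀ t ∈ Icc x y, 0 < t := fun t ht => one_pos.trans_le (hx.trans ht.1)
  refine (norm_integral_cexp_div_le (φ := fun s => lam * s ^ ε - s)
    (g := fun s => lam * ε * s ^ ε - s) (h := fun s => lam * ε * ε * s ^ ε - s) (c := 4)
    (one_pos.trans_le hx) hxy zero_le_four
    (fun t ht => hasDerivAt_mul_rpow_sub_self lam ε (hpos t ht))
    (fun t ht => hasDerivAt_mul_rpow_sub_self (lam * ε) ε (hpos t ht))
    (fun t ht => (hasDerivAt_mul_rpow_sub_self (lam * ε * ε) ε (hpos t ht)).continuousAt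
      |>.continuousWithinAt) (fun t ht => ?_) (fun t ht => ?_)).trans ?_
  · have ht0 := hpos t ht
    show t / 2 ≤ |lam * ε * t ^ ε - t|
    rw [mul_rpow_sub_self_eq _ _ ht0, abs_mul, abs_of_pos ht0]
    linarith [mul_le_mul_of_nonneg_left (h t ht) ht0.le]
  · have ht0 := hpos t ht
    show |lam * ε * ε * t ^ ε - t| ≤ 4 * (lam * ε * t ^ ε - t) ^ 2 / t
    set X := lam * ε * t ^ (ε - 1)
    have hX : 0 ≤ X := by positivity
    have hεX : lam * ε * ε * t ^ (ε - 1) = ε * X := by ring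
    rw [mul_rpow_sub_self_eq _ _ ht0, mul_rpow_sub_self_eq _ _ ht0, hεX, abs_mul,
      abs_of_pos ht0]
    calc t * |ε * X - 1| ≤ t * (4 * (X - 1) ^ 2) := by
          gcongr; exact abs_mul_sub_one_le hε0 hε1 hX (h t ht)
      _ = 4 * (t * (X - 1)) ^ 2 / t := by field_simp
  · rw [div_le_iff₀ (one_pos.trans_le hx)]; linarith

theorem two_le_mul_rpow_sub_one {μ ε t : ℝ} (hμ : 0 ≤ μ) (hε : ε < 1) (ht : 0 < t)
    (htμ : t ≤ (μ / 2) ^ (1 - ε)⁻¹) : 2 ≤ μ * t ^ (ε - 1) := by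
  have hpow : 0 < t ^ (1 - ε) := Real.rpow_pos_of_pos ht _
  rw [Real.le_rpow_inv_iff_of_pos ht.le (by positivity) (by linarith)] at htμ
  rw [show ε - 1 = -(1 - ε) by ring, Real.rpow_neg ht.le, le_mul_inv_iff₀ hpow]
  linarith

theorem mul_rpow_sub_one_le_half {μ ε t : ℝ} (hμ : 0 ≤ μ) (hε : ε < 1) (ht : 0 < t)
    (htμ : (2 * μ) ^ (1 - ε)⁻¹ ≤ t) : μ * t ^ (ε - 1) ≤ 1 / 2 := by
  have hpow : 0 < t ^ (1 - ε) := Real.rpow_pos_of_pos ht _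
  rw [Real.rpow_inv_le_iff_of_pos (by positivity) ht.le (by linarith)] at htμ
  rw [show ε - 1 = -(1 - ε) by ring, Real.rpow_neg ht.le, mul_inv_le_iff₀ hpow]
  linarith

theorem rpow_two_mul_le_sixteen_mul {μ ε : ℝ} (hμ : 0 ≤ μ) (hε : ε ≤ 1 / 2) :
    (2 * μ) ^ (1 - ε)⁻¹ ≤ 16 * (μ / 2) ^ (1 - ε)⁻¹ := by
  have hk : (1 - ε)⁻¹ ≤ 2 := by
    rw [inv_le_comm₀ (by linarith) two_pos]; linarith
  rw [show 2 * μ = 4 * (μ / 2) by ring, Real.mul_rpow (by norm_num) (by positivity)]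
  gcongr
  calc (4 : ℝ) ^ (1 - ε)⁻¹ ≤ 4 ^ (2 : ℝ) := Real.rpow_le_rpow_of_exponent_le (by norm_num) hk
    _ = 16 := by norm_num

theorem min_max_le_mul_min_max {R x y : ℝ} (hR : 1 ≤ R) (hxy : y ≤ 16 * x) :
    min R (max 1 y) ≤ 16 * min R (max 1 x) := by
  simp only [min_def, max_def]
  split_ifs <;> linarith

theorem norm_integral_phaseIntegrand_le (lam ε : ℝ) {a b : ℝ} (ha : 0 < a) (hab : a ≤ b) :
    ‖∫ t in a..b, phaseIntegrand lam ε t‖ ≤ (b - a) / a := by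
  refine (norm_integral_le_of_norm_le_const (C := a⁻¹) fun t ht => ?_).trans_eq ?_
  · rw [uIoc_of_le hab] at ht
    rw [norm_phaseIntegrand lam ε (ha.trans ht.1)]
    exact inv_anti₀ ha ht.1.le
  · rw [abs_of_nonneg (sub_nonneg.mpr hab), inv_mul_eq_div]

theorem norm_integral_one_min_max_le {lam ε R : ℝ} (hlam : 0 ≤ lam) (hε0 : 0 ≤ ε) (hε : ε < 1)
    (hR : 1 ≤ R) :
    ‖∫ t in (1 : ℝ)..min R (max 1 ((lam * ε / 2) ^ (1 - ε)⁻¹)), phaseIntegrand lam ε t‖ ≤ 8 := by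
  rcases le_total ((lam * ε / 2) ^ (1 - ε)⁻¹) 1 with hT | hT
  · rw [max_eq_left hT, min_eq_right hR, integral_same, norm_zero]
    norm_num
  rw [max_eq_right hT]
  refine norm_integral_phaseIntegrand_le_of_nonstationary hlam hε0 hε.le le_rfl
    (le_min hR hT) fun t ht => ?_
  have h2 := two_le_mul_rpow_sub_one (by positivity) hε (one_pos.trans_le ht.1)
    (ht.2.trans (min_le_right _ _))
  rw [abs_of_pos (by linarith)]
  linarith

theorem norm_integral_min_max_le {lam ε R : ℝ} (hlam : 0 ≤ lam) (hε0 : 0 ≤ ε) (hε : ε < 1) :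
    ‖∫ t in min R (max 1 ((2 * (lam * ε)) ^ (1 - ε)⁻¹))..R, phaseIntegrand lam ε t‖ ≤ 8 := by
  rcases le_total R (max 1 ((2 * (lam * ε)) ^ (1 - ε)⁻¹)) with hR | hR
  · rw [min_eq_left hR, integral_same, norm_zero]
    norm_num
  rw [min_eq_right hR]
  refine norm_integral_phaseIntegrand_le_of_nonstationary hlam hε0 hε.le (le_max_left _ _) hR
    fun t ht => ?_
  have h2 := mul_rpow_sub_one_le_half (by positivity) hε (one_pos.trans_le
    ((le_max_left _ _).trans ht.1)) ((le_max_right _ _).trans ht.1)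
  rw [abs_of_neg (by linarith)]
  linarith

theorem stmt_17 :
    ∃ C : ℝ, 0 < C ∧ ∀ ε : ℝ, ε ∈ Set.Ioc (0 : ℝ) (1 / 2) → ∀ lam : ℝ, 0 ≤ lam →
      ∀ R : ℝ, 1 ≤ R →
        ‖∫ t in (1 : ℝ)..R,
            Complex.exp (Complex.I * ((lam * t ^ ε - t : ℝ) : ℂ)) / (t : ℂ)‖ ≤ C := by
  refine ⟨31, by norm_num, ?_⟩
  rintro ε ⟨hε0, hε⟩ lam hlam R hR
  have hε1 : ε < 1 := by linarith
  set a := min R (max 1 ((lam * ε / 2) ^ (1 - ε)⁻¹))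
  set b := min R (max 1 ((2 * (lam * ε)) ^ (1 - ε)⁻¹))
  have ha : 1 ≤ a := le_min hR (le_max_left _ _)
  have hab : a ≤ b := min_le_min_left R (max_le_max_left 1 (Real.rpow_le_rpow (by positivity)
    (by linarith [mul_nonneg hlam hε0.le]) (inv_nonneg.mpr (by linarith))))
  have hb : b ≤ 16 * a :=
    min_max_le_mul_min_max hR (rpow_two_mul_le_sixteen_mul (by positivity) hε)
  have hint := fun x y (hx : 1 ≤ x) (hy : 1 ≤ y) =>
    intervalIntegrable_phaseIntegrand lam ε (one_pos.trans_le hx) (one_pos.trans_le hy)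
  have hmid : ‖∫ t in a..b, phaseIntegrand lam ε t‖ ≤ 15 :=
    (norm_integral_phaseIntegrand_le lam ε (one_pos.trans_le ha) hab).trans
      (by rw [div_le_iff₀ (one_pos.trans_le ha)]; linarith)
  show ‖∫ t in (1 : ℝ)..R, phaseIntegrand lam ε t‖ ≤ 31
  rw [← integral_add_adjacent_intervals (hint 1 a le_rfl ha) (hint a R ha hR),
    ← integral_add_adjacent_intervals (hint a b ha (ha.trans hab)) (hint b R (ha.trans hab) hR)]
  calc _ ≤ 8 + (15 + 8) := (norm_add_le _ _).trans (add_le_add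
        (norm_integral_one_min_max_le hlam hε0.le hε1 hR)
        ((norm_add_le _ _).trans (add_le_add hmid (norm_integral_min_max_le hlam hε0.le hε1))))
    _ = 31 := by norm_num
end

section
/- There exists a universal constant C > 0 such that for every ε ∈ (0, 1/2], every λ ≥ 0, and every R ≥ 1, one has | ∫_1^R e^{i(λ t^ε + t)} dt/t | ≤ C. -/
/-!
Write the phase as `φ t = λ t^ε + t`. Since `t φ'(t) = g t := λ ε t^ε + t`, the integrand is
`e^{iφ} φ' / g`, and `g ≥ 1` is nondecreasing. Integrating by parts against `(1/g)` (first
derivative test) bounds the integral by the two boundary terms plus the total variation of `1/g`,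
i.e. by `2 / g 1 ≤ 2`.
-/

open Set intervalIntegral

section FirstDerivativeTest

variable {a b : ℝ} {g g' : ℝ → ℝ}

theorem HasDerivAt.neg_I_mul_cexp_I_mul {φ : ℝ → ℝ} {φ' t : ℝ} (hφ : HasDerivAt φ φ' t) :
    HasDerivAt (fun s => -Complex.I * Complex.exp (Complex.I * φ s))
      (Complex.exp (Complex.I * φ t) * φ') t := by
  refine ((hφ.ofReal_comp.const_mul Complex.I).cexp.const_mul (-Complex.I)).congr_deriv ?_
  linear_combination (-(Complex.exp (Complex.I * φ t) * φ')) * Complex.I_mul_I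

theorem integral_deriv_div_sq_eq_inv_sub_inv (hab : a ≤ b)
    (hg : ∀ t ∈ Icc a b, HasDerivAt g (g' t) t) (hg' : ContinuousOn g' (Icc a b))
    (hg_pos : ∀ t ∈ Icc a b, 0 < g t) :
    ∫ t in a..b, g' t / g t ^ 2 = (g a)⁻¹ - (g b)⁻¹ := by
  rw [← uIcc_of_le hab] at hg hg' hg_pos
  have hderiv : ∀ t ∈ uIcc a b, HasDerivAt (fun s => -(g s)⁻¹) (g' t / g t ^ 2) t := by
    intro t ht
    have h := ((hg t ht).inv (hg_pos t ht).ne').neg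
    rw [neg_div, neg_neg] at h
    exact h
  have hcont : ContinuousOn g (uIcc a b) := fun t ht => (hg t ht).continuousAt.continuousWithinAt
  rw [integral_eq_sub_of_hasDerivAt hderiv
    (hg'.div (hcont.pow 2) fun t ht => (pow_pos (hg_pos t ht) 2).ne').intervalIntegrable]
  ring

theorem norm_integral_cexp_mul_deriv_div_le {φ φ' : ℝ → ℝ} (hab : a ≤ b)
    (hφ : ∀ t ∈ Icc a b, HasDerivAt φ (φ' t) t) (hφ' : ContinuousOn φ' (Icc a b))
    (hg : ∀ t ∈ Icc a b, HasDerivAt g (g' t) t) (hg' : ContinuousOn g' (Icc a b))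
    (hg_pos : ∀ t ∈ Icc a b, 0 < g t) (hg'_nonneg : ∀ t ∈ Icc a b, 0 ≤ g' t) :
    ‖∫ t in a..b, Complex.exp (Complex.I * φ t) * φ' t / g t‖ ≤ 2 / g a := by
  set u : ℝ → ℂ := fun t => ((g t)⁻¹ : ℝ)
  set u' : ℝ → ℂ := fun t => ((-(g' t) / g t ^ 2 : ℝ) : ℂ)
  set v : ℝ → ℂ := fun t => -Complex.I * Complex.exp (Complex.I * φ t)
  set v' : ℝ → ℂ := fun t => Complex.exp (Complex.I * φ t) * φ' t
  have hab' : uIcc a b = Icc a b := uIcc_of_le hab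
  have hcont_g : ContinuousOn g (Icc a b) := fun t ht => (hg t ht).continuousAt.continuousWithinAt
  have hcont_φ : ContinuousOn φ (Icc a b) := fun t ht => (hφ t ht).continuousAt.continuousWithinAt
  have hu : ∀ t ∈ uIcc a b, HasDerivAt u (u' t) t := by
    intro t ht
    rw [hab'] at ht
    simpa [u, u'] using ((hg t ht).inv (hg_pos t ht).ne').ofReal_comp
  have hv : ∀ t ∈ uIcc a b, HasDerivAt v (v' t) t := fun t ht =>
    (hφ t (hab' ▸ ht)).neg_I_mul_cexp_I_mul
  have hu'_int : IntervalIntegrable u' MeasureTheory.volume a b := by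
    refine ContinuousOn.intervalIntegrable (hab' ▸ ?_)
    exact Complex.continuous_ofReal.comp_continuousOn
      (hg'.neg.div (hcont_g.pow 2) fun t ht => (pow_pos (hg_pos t ht) 2).ne')
  have hv'_int : IntervalIntegrable v' MeasureTheory.volume a b := by
    refine ContinuousOn.intervalIntegrable (hab' ▸ ?_)
    exact (Complex.continuous_exp.comp_continuousOn
      ((Complex.continuous_ofReal.comp_continuousOn hcont_φ).const_smul Complex.I)).mul
      (Complex.continuous_ofReal.comp_continuousOn hφ')
  have hnorm_v : ∀ t, ‖v t‖ = 1 := fun t => by simp [v, Complex.norm_exp]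
  have hnorm_u : ∀ t ∈ Icc a b, ‖u t‖ = (g t)⁻¹ := fun t ht => by
    simp [u, abs_of_pos (hg_pos t ht)]
  have hrewrite : ∫ t in a..b, Complex.exp (Complex.I * φ t) * φ' t / g t
      = ∫ t in a..b, u t * v' t :=
    integral_congr fun t _ => by simp only [u, v', Complex.ofReal_inv]; ring
  have hvariation : ‖∫ t in a..b, u' t * v t‖ ≤ (g a)⁻¹ - (g b)⁻¹ := by
    calc ‖∫ t in a..b, u' t * v t‖ ≤ ∫ t in a..b, ‖u' t * v t‖ :=
          norm_integral_le_integral_norm hab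
      _ = ∫ t in a..b, g' t / g t ^ 2 := by
          refine integral_congr fun t ht => ?_
          rw [hab'] at ht
          simp [u', hnorm_v, abs_of_nonneg (hg'_nonneg t ht)]
      _ = (g a)⁻¹ - (g b)⁻¹ := integral_deriv_div_sq_eq_inv_sub_inv hab hg hg' hg_pos
  have ha : a ∈ Icc a b := left_mem_Icc.2 hab
  have hb : b ∈ Icc a b := right_mem_Icc.2 hab
  rw [hrewrite, integral_mul_deriv_eq_deriv_mul hu hv hu'_int hv'_int]
  calc ‖u b * v b - u a * v a - ∫ t in a..b, u' t * v t‖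
      ≤ ‖u b * v b‖ + ‖u a * v a‖ + ‖∫ t in a..b, u' t * v t‖ :=
        (norm_sub_le _ _).trans (by gcongr; exact norm_sub_le _ _)
    _ ≤ (g b)⁻¹ + (g a)⁻¹ + ((g a)⁻¹ - (g b)⁻¹) := by
        rw [norm_mul (u b), norm_mul (u a), hnorm_v, hnorm_v, mul_one, mul_one, hnorm_u b hb,
          hnorm_u a ha]
        gcongr
    _ = 2 / g a := by ring

end FirstDerivativeTest

theorem norm_integral_cexp_rpow_add_div_le {ε lam R : ℝ} (hε : 0 ≤ ε) (hlam : 0 ≤ lam)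
    (hR : 1 ≤ R) :
    ‖∫ t in (1 : ℝ)..R, Complex.exp (Complex.I * ((lam * t ^ ε + t : ℝ) : ℂ)) / (t : ℂ)‖ ≤
      2 / (lam * ε + 1) := by
  have hpos : ∀ t ∈ Icc 1 R, 0 < t := fun t ht => one_pos.trans_le ht.1
  have hrpow : ∀ t ∈ Icc 1 R, HasDerivAt (fun s : ℝ => s ^ ε) (ε * t ^ (ε - 1)) t :=
    fun t ht => Real.hasDerivAt_rpow_const (Or.inl (hpos t ht).ne')
  have hcont : ContinuousOn (fun t : ℝ => t ^ (ε - 1)) (Icc 1 R) :=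
    continuousOn_id.rpow_const fun t ht => Or.inl (hpos t ht).ne'
  have hweight : ∀ t ∈ Icc 1 R, t * (lam * (ε * t ^ (ε - 1)) + 1) = lam * ε * t ^ ε + t :=
    fun t ht => by rw [Real.rpow_sub_one (hpos t ht).ne']; field_simp [(hpos t ht).ne']
  have hbound := norm_integral_cexp_mul_deriv_div_le (φ := fun t => lam * t ^ ε + t)
    (g := fun t => lam * ε * t ^ ε + t) hR
    (fun t ht => ((hrpow t ht).const_mul lam).add (hasDerivAt_id t))
    ((hcont.const_smul ε).const_smul lam |>.add continuousOn_const)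
    (fun t ht => ((hrpow t ht).const_mul (lam * ε)).add (hasDerivAt_id t))
    ((hcont.const_smul ε).const_smul (lam * ε) |>.add continuousOn_const)
    (fun t ht => by have := hpos t ht; positivity)
    (fun t ht => by have := hpos t ht; positivity)
  calc _ = ‖∫ t in (1 : ℝ)..R, Complex.exp (Complex.I * ((lam * t ^ ε + t : ℝ) : ℂ)) *
        ((lam * (ε * t ^ (ε - 1)) + 1 : ℝ) : ℂ) / ((lam * ε * t ^ ε + t : ℝ) : ℂ)‖ := by
        congr 1
        refine integral_congr fun t ht => ?_
        rw [uIcc_of_le hR] at ht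
        have hderiv_pos : 0 < lam * (ε * t ^ (ε - 1)) + 1 := by have := hpos t ht; positivity
        rw [← hweight t ht, Complex.ofReal_mul]
        exact (mul_div_mul_right _ _ (Complex.ofReal_ne_zero.2 hderiv_pos.ne')).symm
    _ ≤ 2 / (lam * ε * 1 ^ ε + 1) := hbound
    _ = 2 / (lam * ε + 1) := by rw [Real.one_rpow, mul_one]

theorem stmt_18 :
    ∃ C : ℝ, 0 < C ∧ ∀ ε : ℝ, ε ∈ Set.Ioc (0 : ℝ) (1 / 2) → ∀ lam : ℝ, 0 ≤ lam →
      ∀ R : ℝ, 1 ≤ R →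
        ‖∫ t in (1 : ℝ)..R,
            Complex.exp (Complex.I * ((lam * t ^ ε + t : ℝ) : ℂ)) / (t : ℂ)‖ ≤ C := by
  refine ⟨2, two_pos, fun ε hε lam hlam R hR => ?_⟩
  refine (norm_integral_cexp_rpow_add_div_le hε.1.le hlam hR).trans ?_
  exact div_le_self zero_le_two (le_add_of_nonneg_left (mul_nonneg hlam hε.1.le))
end

section
/- There exists a universal constant C > 0 such that for every ε ∈ (1, 2], every λ ≤ 0, and every R > 0, one has | ∫_0^R sin(λ t^ε − t) dt/t | ≤ C. -/
/-!
With `φ t = lam * t ^ ε - t` and `D t = -t φ'(t) = t - lam ε t ^ ε`, the function `D` is positive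
and increasing and `|φ| ≤ D`. Then `sin φ / t = G' / D` for `G = cos φ - 1`, and integrating by
parts against `D⁻¹` leaves boundary terms `|G / D| ≤ 1` and the integral of `D' |G| / D ^ 2`, which
`|G| ≤ min 2 (D ^ 2 / 2)` bounds by `∫ 8 D' / (1 + D) ^ 2 ≤ 8`. This works on `[a, R]` for any
`a > 0`; near `0` the integrand is bounded by `1 - lam`, so `[0, 1 / (1 - lam)]` contributes at
most `1`.
-/

open Set intervalIntegral MeasureTheory Real

lemma abs_div_le_one_of_abs_le {g d : ℝ} (hd : 0 < d) (h2 : |g| ≤ 2) (hsq : |g| ≤ d ^ 2 / 2) :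
    |g / d| ≤ 1 := by
  rw [abs_div, abs_of_pos hd, div_le_one hd]
  rcases le_total d 2 with h | h <;> nlinarith

lemma abs_div_sq_le_of_abs_le {g d : ℝ} (hd : 0 < d) (h2 : |g| ≤ 2) (hsq : |g| ≤ d ^ 2 / 2) :
    |g| / d ^ 2 ≤ 8 / (1 + d) ^ 2 := by
  rw [div_le_div_iff₀ (by positivity) (by positivity)]
  rcases le_total d 3 with h | h <;> nlinarith [abs_nonneg g]

lemma abs_cos_sub_one_le_sq_div_two (x : ℝ) : |cos x - 1| ≤ x ^ 2 / 2 := by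
  rw [abs_of_nonpos (by linarith [cos_le_one x])]
  linarith [one_sub_sq_div_two_le_cos (x := x)]

lemma abs_cos_sub_one_le_two (x : ℝ) : |cos x - 1| ≤ 2 := by
  rw [abs_le]; constructor <;> linarith [cos_le_one x, neg_one_le_cos x]

lemma integral_deriv_div_one_add_sq_le_one {D D' : ℝ → ℝ} {a b : ℝ} (hab : a ≤ b)
    (hD : ∀ x ∈ Icc a b, HasDerivAt D (D' x) x) (hD'c : ContinuousOn D' (Icc a b))
    (hD_nonneg : ∀ x ∈ Icc a b, 0 ≤ D x) :
    ∫ x in a..b, D' x / (1 + D x) ^ 2 ≤ 1 := by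
  have hpos : ∀ x ∈ Icc a b, 0 < 1 + D x := fun x hx => by linarith [hD_nonneg x hx]
  have hDc : ContinuousOn D (Icc a b) := HasDerivAt.continuousOn hD
  have hftc : ∫ x in a..b, D' x / (1 + D x) ^ 2 = (1 + D a)⁻¹ - (1 + D b)⁻¹ := by
    rw [integral_eq_sub_of_hasDerivAt (f := fun x => -(1 + D x)⁻¹)]
    · ring
    · intro x hx
      rw [uIcc_of_le hab] at hx
      exact (((hD x hx).const_add 1).inv (hpos x hx).ne').neg.congr_deriv (by ring)
    · refine (hD'c.div ((continuousOn_const.add hDc).pow 2) fun x hx => ?_)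
        |>.intervalIntegrable_of_Icc hab
      exact pow_ne_zero _ (hpos x hx).ne'
  have ha : (1 + D a)⁻¹ ≤ 1 :=
    inv_le_one_of_one_le₀ (by linarith [hD_nonneg a (left_mem_Icc.2 hab)])
  have hb : 0 < (1 + D b)⁻¹ := inv_pos.2 (hpos b (right_mem_Icc.2 hab))
  linarith

lemma abs_integral_deriv_div_sq_mul_le_eight {D D' G : ℝ → ℝ} {a b : ℝ} (hab : a ≤ b)
    (hD : ∀ x ∈ Icc a b, HasDerivAt D (D' x) x) (hD'c : ContinuousOn D' (Icc a b))
    (hD'_nonneg : ∀ x ∈ Icc a b, 0 ≤ D' x) (hD_pos : ∀ x ∈ Icc a b, 0 < D x)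
    (hG_two : ∀ x ∈ Icc a b, |G x| ≤ 2) (hG_sq : ∀ x ∈ Icc a b, |G x| ≤ D x ^ 2 / 2) :
    |∫ x in a..b, -D' x / D x ^ 2 * G x| ≤ 8 := by
  have hDc : ContinuousOn D (Icc a b) := HasDerivAt.continuousOn hD
  have hdominant : IntervalIntegrable (fun x => 8 * (D' x / (1 + D x) ^ 2)) volume a b := by
    refine (continuousOn_const.mul (hD'c.div ((continuousOn_const.add hDc).pow 2)
      fun x hx => ?_)).intervalIntegrable_of_Icc hab
    exact pow_ne_zero _ (show (0 : ℝ) < 1 + D x by linarith [hD_pos x hx]).ne'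
  calc ‖∫ x in a..b, -D' x / D x ^ 2 * G x‖
      ≤ ∫ x in a..b, 8 * (D' x / (1 + D x) ^ 2) := by
        refine norm_integral_le_of_norm_le hab (ae_of_all _ fun x hx => ?_) hdominant
        replace hx : x ∈ Icc a b := Ioc_subset_Icc_self hx
        have hDx := hD_pos x hx
        rw [Real.norm_eq_abs, abs_mul, abs_div, abs_neg, abs_of_nonneg (hD'_nonneg x hx),
          abs_of_pos (pow_pos hDx 2)]
        calc D' x / D x ^ 2 * |G x| = D' x * (|G x| / D x ^ 2) := by ring
          _ ≤ D' x * (8 / (1 + D x) ^ 2) := mul_le_mul_of_nonneg_left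
              (abs_div_sq_le_of_abs_le hDx (hG_two x hx) (hG_sq x hx)) (hD'_nonneg x hx)
          _ = 8 * (D' x / (1 + D x) ^ 2) := by ring
    _ ≤ 8 := by
      rw [intervalIntegral.integral_const_mul]
      linarith [integral_deriv_div_one_add_sq_le_one hab hD hD'c fun x hx => (hD_pos x hx).le]

theorem abs_integral_deriv_div_le_ten {D D' G G' : ℝ → ℝ} {a b : ℝ} (hab : a ≤ b)
    (hD : ∀ x ∈ Icc a b, HasDerivAt D (D' x) x) (hG : ∀ x ∈ Icc a b, HasDerivAt G (G' x) x)
    (hD'c : ContinuousOn D' (Icc a b)) (hG'c : ContinuousOn G' (Icc a b))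
    (hD'_nonneg : ∀ x ∈ Icc a b, 0 ≤ D' x) (hD_pos : ∀ x ∈ Icc a b, 0 < D x)
    (hG_two : ∀ x ∈ Icc a b, |G x| ≤ 2) (hG_sq : ∀ x ∈ Icc a b, |G x| ≤ D x ^ 2 / 2) :
    |∫ x in a..b, G' x / D x| ≤ 10 := by
  have hinv'c : ContinuousOn (fun x => -D' x / D x ^ 2) (Icc a b) :=
    hD'c.neg.div ((HasDerivAt.continuousOn hD).pow 2) fun x hx => pow_ne_zero _ (hD_pos x hx).ne'
  have ibp : ∫ x in a..b, G' x / D x =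
      (D b)⁻¹ * G b - (D a)⁻¹ * G a - ∫ x in a..b, -D' x / D x ^ 2 * G x := by
    simp only [div_eq_inv_mul (G' _)]
    refine integral_mul_deriv_eq_deriv_mul (fun x hx => ?_) (fun x hx => ?_)
      (hinv'c.intervalIntegrable_of_Icc hab) (hG'c.intervalIntegrable_of_Icc hab)
    · rw [uIcc_of_le hab] at hx
      exact (hD x hx).inv (hD_pos x hx).ne'
    · rw [uIcc_of_le hab] at hx
      exact hG x hx
  have hboundary : ∀ x ∈ Icc a b, |(D x)⁻¹ * G x| ≤ 1 := fun x hx => by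
    rw [inv_mul_eq_div]
    exact abs_div_le_one_of_abs_le (hD_pos x hx) (hG_two x hx) (hG_sq x hx)
  rw [ibp]
  calc _ ≤ |(D b)⁻¹ * G b| + |(D a)⁻¹ * G a| + |∫ x in a..b, -D' x / D x ^ 2 * G x| :=
        (abs_sub _ _).trans (by gcongr; exact abs_sub _ _)
    _ ≤ 1 + 1 + 8 := by
      gcongr
      · exact hboundary b (right_mem_Icc.2 hab)
      · exact hboundary a (left_mem_Icc.2 hab)
      · exact abs_integral_deriv_div_sq_mul_le_eight hab hD hD'c hD'_nonneg hD_pos hG_two hG_sq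
    _ = 10 := by norm_num

theorem abs_integral_sin_div_le_ten {φ φ' D' : ℝ → ℝ} {a b : ℝ} (ha : 0 < a) (hab : a ≤ b)
    (hφ : ∀ x ∈ Icc a b, HasDerivAt φ (φ' x) x)
    (hD : ∀ x ∈ Icc a b, HasDerivAt (fun t => -(t * φ' t)) (D' x) x)
    (hD'c : ContinuousOn D' (Icc a b)) (hD'_nonneg : ∀ x ∈ Icc a b, 0 ≤ D' x)
    (hφ'_neg : ∀ x ∈ Icc a b, φ' x < 0) (hφ_le : ∀ x ∈ Icc a b, |φ x| ≤ -(x * φ' x)) :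
    |∫ x in a..b, sin (φ x) / x| ≤ 10 := by
  have hx0 : ∀ x ∈ Icc a b, 0 < x := fun x hx => ha.trans_le hx.1
  have hφ'c : ContinuousOn φ' (Icc a b) := by
    refine ((HasDerivAt.continuousOn hD).div continuousOn_id fun x hx => (hx0 x hx).ne').neg.congr
      fun x hx => ?_
    simp only [Pi.neg_apply, Pi.div_apply, id, neg_div, neg_neg,
      mul_div_cancel_left₀ _ (hx0 x hx).ne']
  have hG'c : ContinuousOn (fun x => -sin (φ x) * φ' x) (Icc a b) :=
    (continuous_sin.comp_continuousOn (HasDerivAt.continuousOn hφ)).neg.mul hφ'c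
  have hD_pos : ∀ x ∈ Icc a b, 0 < -(x * φ' x) := fun x hx =>
    neg_pos.2 (mul_neg_of_pos_of_neg (hx0 x hx) (hφ'_neg x hx))
  have hintegrand : EqOn (fun x => sin (φ x) / x) (fun x => -sin (φ x) * φ' x / -(x * φ' x))
      (uIcc a b) := fun x hx => by
    rw [uIcc_of_le hab] at hx
    field_simp [(hx0 x hx).ne', (hφ'_neg x hx).ne]
  rw [integral_congr hintegrand]
  refine abs_integral_deriv_div_le_ten hab hD (fun x hx => (hφ x hx).cos.sub_const 1) hD'c hG'c
    hD'_nonneg hD_pos (fun x _ => abs_cos_sub_one_le_two _) fun x hx => ?_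
  refine (abs_cos_sub_one_le_sq_div_two _).trans ?_
  rw [← sq_abs (φ x)]
  gcongr
  exact hφ_le x hx

theorem abs_integral_sin_rpow_sub_div_le_ten {ε lam a b : ℝ} (hε : 1 ≤ ε) (hlam : lam ≤ 0)
    (ha : 0 < a) (hab : a ≤ b) :
    |∫ x in a..b, sin (lam * x ^ ε - x) / x| ≤ 10 := by
  have hx0 : ∀ x ∈ Icc a b, 0 < x := fun x hx => ha.trans_le hx.1
  have hlam' : 0 ≤ -lam := neg_nonneg.2 hlam
  have hε' : 0 ≤ ε - 1 := sub_nonneg.2 hε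
  refine abs_integral_sin_div_le_ten ha hab (φ' := fun x => lam * (ε * x ^ (ε - 1)) - 1)
    (fun x hx => ((hasDerivAt_rpow_const (Or.inl (hx0 x hx).ne')).const_mul lam).sub
      (hasDerivAt_id' x))
    (fun x hx => ((hasDerivAt_id' x).mul
      ((((hasDerivAt_rpow_const (Or.inl (hx0 x hx).ne')).const_mul ε).const_mul lam).sub_const
        1)).neg)
    ?_ (fun x hx => ?_) (fun x hx => ?_) (fun x hx => ?_)
  · fun_prop (disch := exact fun x hx => (hx0 x hx).ne')
  · have hx := hx0 x hx
    have h1 : 0 ≤ -lam * (ε * x ^ (ε - 1)) := by positivity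
    have h2 : 0 ≤ -lam * (ε * ((ε - 1) * x ^ (ε - 1 - 1))) * x := by positivity
    linarith
  · have hx := hx0 x hx
    have : 0 ≤ -lam * (ε * x ^ (ε - 1)) := by positivity
    linarith
  · have hx := hx0 x hx
    have hxε : x * (lam * (ε * x ^ (ε - 1)) - 1) = lam * ε * x ^ ε - x := by
      rw [rpow_sub_one hx.ne']; field_simp
    have hpow : 0 < x ^ ε := by positivity
    have : 0 ≤ -lam * x ^ ε * (ε - 1) := by positivity
    rw [hxε, abs_of_nonpos (by nlinarith)]
    linarith

lemma abs_sin_rpow_sub_div_le {ε lam t : ℝ} (hε : 1 ≤ ε) (hlam : lam ≤ 0) (ht : 0 < t) :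
    |sin (lam * t ^ ε - t) / t| ≤ 1 - lam := by
  rw [abs_div, abs_of_pos ht, div_le_iff₀ ht]
  rcases le_total t 1 with ht1 | ht1
  · have hpow : t ^ ε ≤ t := by
      simpa using rpow_le_rpow_of_exponent_ge ht ht1 hε
    have := rpow_pos_of_pos ht ε
    calc |sin (lam * t ^ ε - t)| ≤ |lam * t ^ ε - t| := abs_sin_le_abs
      _ = t - lam * t ^ ε := by rw [abs_of_nonpos (by nlinarith)]; ring
      _ ≤ (1 - lam) * t := by nlinarith
  · calc |sin (lam * t ^ ε - t)| ≤ 1 := abs_sin_le_one _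
      _ ≤ (1 - lam) * t := by nlinarith

lemma intervalIntegrable_sin_rpow_sub_div {ε lam b : ℝ} (hε : 1 ≤ ε) (hlam : lam ≤ 0)
    (hb : 0 ≤ b) : IntervalIntegrable (fun t => sin (lam * t ^ ε - t) / t) volume 0 b := by
  refine (intervalIntegrable_const (c := 1 - lam)).mono_fun'
    (by fun_prop : Measurable fun t => sin (lam * t ^ ε - t) / t).aestronglyMeasurable ?_
  rw [uIoc_of_le hb]
  filter_upwards [ae_restrict_mem measurableSet_Ioc] with t ht
  exact abs_sin_rpow_sub_div_le hε hlam ht.1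

theorem stmt_19 :
    ∃ C : ℝ, 0 < C ∧ ∀ ε : ℝ, ε ∈ Set.Ioc (1 : ℝ) 2 → ∀ lam : ℝ, lam ≤ 0 →
      ∀ R : ℝ, 0 < R →
        |∫ t in (0 : ℝ)..R, Real.sin (lam * t ^ ε - t) / t| ≤ C := by
  refine ⟨11, by norm_num, ?_⟩
  rintro ε ⟨hε, -⟩ lam hlam R hR
  replace hε := hε.le
  set a := min R (1 - lam)⁻¹
  have ha : 0 < a := lt_min hR (inv_pos.2 (by linarith))
  have hnear : ‖∫ t in (0 : ℝ)..a, sin (lam * t ^ ε - t) / t‖ ≤ 1 := calc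
    _ ≤ (1 - lam) * |a - 0| := norm_integral_le_of_norm_le_const fun t ht =>
        abs_sin_rpow_sub_div_le hε hlam (uIoc_of_le ha.le ▸ ht).1
    _ ≤ (1 - lam) * (1 - lam)⁻¹ := by
        rw [sub_zero, abs_of_pos ha]
        gcongr
        · linarith
        · exact min_le_right _ _
    _ = 1 := mul_inv_cancel₀ (by linarith)
  have h0a := intervalIntegrable_sin_rpow_sub_div hε hlam ha.le
  rw [← integral_add_adjacent_intervals h0a
    (h0a.symm.trans (intervalIntegrable_sin_rpow_sub_div hε hlam hR.le))]
  calc _ ≤ _ := abs_add_le _ _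
    _ ≤ 1 + 10 := add_le_add hnear
        (abs_integral_sin_rpow_sub_div_le_ten hε hlam ha (min_le_left _ _))
    _ = 11 := by norm_num
end
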